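/- arXiv:1311.1581 — 2 statements merged into one kernel-verified Lean document; each statement's English description precedes it below -/
import Mathlib

section
/- Let α be a positive even integer, n = α+3, and f(p) = Σ_{j=0}^{n−1} (−1)^j cos(jπ/n)^p for p > 0. Then f(p) = 0 for every odd positive integer p < n, and f(p) < 0 for all p ∈ (α−1, α+1). -/
/-!
Folding the sum by `j ↦ n - j` (with `n = 2M + 1`) turns it into the exponential sum
`F(p) = 1 + 2 ∑_{i=1}^{M} (-1)^i cos(iπ/n)^p`, which has `M + 1` distinct exponents. For an odd
integer `p < n`, write `(-1)^j cos(jπ/n) = (η^j + η^{-j}) / 2` with `η` a primitive `n`-th root of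
unity; expanding the `p`-th power leaves geometric sums of nontrivial `n`-th roots of unity, which
vanish. So `F` vanishes at `1, 3, …, 2M - 1`.

By Rolle and induction on the number of terms, an exponential sum with `k` terms has fewer than
`k` zeros, so `F'` has at most `M - 1` zeros. If `F(p) ≥ 0` for some `p` between the last two
zeros `2M - 3` and `2M - 1`, then either `p` is another zero, or `F` has an interior maximum there
and (since `F → 1` at `+∞`) an interior minimum further right. Together with the `M - 2` critical
points that Rolle gives between `1, …, 2M - 3`, this gives `M` critical points, a contradiction.
-/

/-- The odd power function `ψ_p(x) = sign(x)|x|^p`. -/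
noncomputable def psiPow (p x : ℝ) : ℝ := Real.sign x * |x| ^ p

open Finset Real Filter Topology

theorem exists_finset_deriv_eq_zero {f : ℝ → ℝ} (hf : Differentiable ℝ f) {Z : Finset ℝ}
    (hZ : ∀ x ∈ Z, f x = 0) :
    ∃ t : Finset ℝ, Z.card ≤ t.card + 1 ∧ ∀ c ∈ t, deriv f c = 0 ∧ ∃ y ∈ Z, c < y := by
  have hrolle : ∀ x ∈ Z, ∀ y ∈ Z, x < y → ∃ c ∈ Set.Ioo x y, deriv f c = 0 :=
    fun x hx y hy hxy =>
      exists_deriv_eq_zero hxy hf.continuous.continuousOn (by rw [hZ x hx, hZ y hy])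
  choose! c hc hcd using hrolle
  refine ⟨((Z ×ˢ Z).filter fun q => q.1 < q.2).image fun q => c q.1 q.2, ?_, ?_⟩
  · refine card_le_of_interleaved fun x hx y hy hxy _ => ⟨c x y, ?_, hc x hx y hy hxy⟩
    exact mem_image.mpr ⟨(x, y), by simp [hx, hy, hxy], rfl⟩
  · simp only [mem_image, mem_filter, mem_product, Prod.exists]
    rintro _ ⟨x, y, ⟨⟨hx, hy⟩, hxy⟩, rfl⟩
    exact ⟨hcd x hx y hy hxy, y, hy, (hc x hx y hy hxy).2⟩

theorem exists_two_deriv_eq_zero_of_pos {f : ℝ → ℝ} (hf : Differentiable ℝ f)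
    (hpos : ∀ᶠ x in atTop, 0 < f x) {a b p : ℝ} (ha : f a = 0) (hb : f b = 0)
    (hp : p ∈ Set.Ioo a b) (hfp : 0 < f p) :
    ∃ x₁ x₂, a < x₁ ∧ x₁ < x₂ ∧ deriv f x₁ = 0 ∧ deriv f x₂ = 0 := by
  obtain ⟨x₁, hx₁, hmax⟩ := isCompact_Icc.exists_isMaxOn_mem_subset (s := Set.Ioo a b)
    hf.continuous.continuousOn (Set.Ioo_subset_Icc_self hp) (by
      rw [Set.Icc_sdiff_Ioo_same (hp.1.trans hp.2).le]
      rintro y (rfl | rfl)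
      exacts [ha ▸ hfp, hb ▸ hfp])
  have hfx₁ : 0 < f x₁ := hfp.trans_le (hmax (Set.Ioo_subset_Icc_self hp))
  obtain ⟨P, hfP, hP⟩ := (hpos.and (eventually_gt_atTop b)).exists
  obtain ⟨x₂, hx₂, hmin⟩ := isCompact_Icc.exists_isLocalMin_mem_open (s := Set.Ioo x₁ P)
    Set.Ioo_subset_Icc_self hf.continuous.continuousOn
    (show b ∈ Set.Icc x₁ P from ⟨hx₁.2.le, hP.le⟩) (by
      rw [Set.Icc_sdiff_Ioo_same (hx₁.2.trans hP).le, hb]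
      rintro y (rfl | rfl)
      exacts [hfx₁, hfP]) isOpen_Ioo
  exact ⟨x₁, x₂, hx₁.1, hx₂.1, (hmax.isLocalMax (Icc_mem_nhds hx₁.1 hx₁.2)).deriv_eq_zero,
    hmin.deriv_eq_zero⟩

theorem lt_zero_of_mem_Ioo_of_card_deriv_zeros_le {f : ℝ → ℝ} (hf : Differentiable ℝ f)
    (hpos : ∀ᶠ x in atTop, 0 < f x) {n : ℕ} {z : ℕ → ℝ} (hz : StrictMono z)
    (hzero : ∀ i ≤ n + 1, f (z i) = 0)
    (hcrit : ∀ t : Finset ℝ, (∀ c ∈ t, deriv f c = 0) → t.card ≤ n + 1)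
    {p : ℝ} (hp : p ∈ Set.Ioo (z n) (z (n + 1))) : f p < 0 := by
  by_contra! hfp
  rcases hfp.eq_or_lt with hfp | hfp
  · have hp_notMem : p ∉ (range (n + 2)).image z := by
      simp only [mem_image, mem_range, not_exists, not_and]
      intro i hi hzi
      rcases Nat.lt_succ_iff_lt_or_eq.mp hi with hi | rfl
      · exact (hz.monotone (Nat.lt_succ_iff.mp hi)).not_gt (hzi ▸ hp.1)
      · exact hp.2.ne hzi.symm
    obtain ⟨t, hcard, ht⟩ := exists_finset_deriv_eq_zero hf
      (Z := insert p ((range (n + 2)).image z)) (by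
        simp only [mem_insert, mem_image, mem_range]
        rintro x (rfl | ⟨i, hi, rfl⟩)
        exacts [hfp.symm, hzero i (by omega)])
    rw [card_insert_of_notMem hp_notMem, card_image_of_injective _ hz.injective,
      card_range] at hcard
    linarith [hcrit t fun c hc => (ht c hc).1]
  · obtain ⟨x₁, x₂, hx₁, hx₁₂, hd₁, hd₂⟩ :=
      exists_two_deriv_eq_zero_of_pos hf hpos (hzero n (by omega)) (hzero (n + 1) le_rfl) hp hfp
    obtain ⟨t, hcard, ht⟩ := exists_finset_deriv_eq_zero hf (Z := (range (n + 1)).image z) (by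
      simp only [mem_image, mem_range]
      rintro x ⟨i, hi, rfl⟩
      exact hzero i (by omega))
    rw [card_image_of_injective _ hz.injective, card_range] at hcard
    have hlt : ∀ c ∈ t, c < x₁ := by
      intro c hc
      obtain ⟨-, y, hy, hcy⟩ := ht c hc
      obtain ⟨i, hi, rfl⟩ := mem_image.mp hy
      exact hcy.trans_le ((hz.monotone (Nat.lt_succ_iff.mp (mem_range.mp hi))).trans hx₁.le)
    have hx₂t : x₂ ∉ t := fun h => (hlt x₂ h).not_gt hx₁₂
    have hx₁t : x₁ ∉ insert x₂ t := by
      simp only [mem_insert, not_or]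
      exact ⟨hx₁₂.ne, fun h => (hlt x₁ h).false⟩
    have := hcrit (insert x₁ (insert x₂ t)) (by
      simp only [mem_insert]
      rintro c (rfl | rfl | hc)
      exacts [hd₁, hd₂, (ht c hc).1])
    rw [card_insert_of_notMem hx₁t, card_insert_of_notMem hx₂t] at this
    omega

noncomputable def expSum {ι : Type*} (s : Finset ι) (a c : ι → ℝ) (x : ℝ) : ℝ :=
  ∑ i ∈ s, a i * exp (c i * x)

section expSum

variable {ι : Type*} (s : Finset ι) (a c : ι → ℝ)

theorem hasDerivAt_expSum (x : ℝ) :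
    HasDerivAt (expSum s a c) (expSum s (fun i => a i * c i) c x) x := by
  unfold expSum
  refine HasDerivAt.fun_sum fun i _ => ?_
  have := (((hasDerivAt_id x).const_mul (c i)).exp).const_mul (a i)
  simp only [id, mul_one] at this
  exact this.congr_deriv (by ring)

theorem differentiable_expSum : Differentiable ℝ (expSum s a c) :=
  fun x => (hasDerivAt_expSum s a c x).differentiableAt

theorem expSum_sub_const (d x : ℝ) :
    expSum s a (fun i => c i - d) x = exp (-(d * x)) * expSum s a c x := by
  rw [expSum, expSum, mul_sum]
  refine sum_congr rfl fun i _ => ?_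
  rw [sub_mul, sub_eq_add_neg, exp_add]
  ring

theorem card_zeros_expSum_lt (hs : s.Nonempty) (ha : ∀ i ∈ s, a i ≠ 0) (hc : Set.InjOn c s)
    {Z : Finset ℝ} (hZ : ∀ x ∈ Z, expSum s a c x = 0) : Z.card < s.card := by
  classical
  induction s using Finset.strongInduction generalizing a c Z with
  | H s ih =>
  obtain ⟨i₀, hi₀⟩ := hs
  rcases (s.erase i₀).eq_empty_or_nonempty with hrest | hrest
  · have hsingle : s = {i₀} := by
      rw [← insert_erase hi₀, hrest]
      rfl
    have : Z = ∅ := eq_empty_of_forall_notMem fun x hx => by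
      have := hZ x hx
      simp only [expSum, hsingle, sum_singleton] at this
      exact mul_ne_zero (ha i₀ hi₀) (exp_ne_zero _) this
    simp [this, hsingle]
  · set c' : ι → ℝ := fun i => c i - c i₀
    obtain ⟨t, hZt, ht⟩ := exists_finset_deriv_eq_zero (differentiable_expSum s a c')
      (Z := Z) fun x hx => by rw [expSum_sub_const, hZ x hx, mul_zero]
    have hderiv : deriv (expSum s a c') = expSum (s.erase i₀) (fun i => a i * c' i) c' := by
      funext x
      rw [(hasDerivAt_expSum s a c' x).deriv, expSum, expSum, sum_erase]
      simp [c']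
    have htcard := ih (s.erase i₀) (erase_ssubset hi₀) _ c' hrest
      (fun i hi => mul_ne_zero (ha i (mem_of_mem_erase hi))
        (sub_ne_zero.mpr fun h => ne_of_mem_erase hi (hc (mem_of_mem_erase hi) hi₀ h)))
      (fun i hi j hj h => hc (mem_of_mem_erase hi) (mem_of_mem_erase hj) (sub_left_inj.mp h))
      (Z := t) fun x hx => hderiv ▸ (ht x hx).1
    rw [card_erase_of_mem hi₀] at htcard
    omega

theorem tendsto_expSum_atTop (hc : ∀ i ∈ s, c i < 0) :
    Tendsto (expSum s a c) atTop (𝓝 0) := by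
  have := tendsto_finsetSum s fun i hi => (tendsto_exp_atBot.comp
    (tendsto_id.const_mul_atTop_of_neg (hc i hi))).const_mul (a i)
  unfold expSum
  simpa only [Function.comp_apply, id, mul_zero, sum_const_zero] using this

end expSum

theorem IsPrimitiveRoot.geom_sum_zpow_eq_zero {K : Type*} [Field K] {η : K} {N : ℕ}
    (hη : IsPrimitiveRoot η N) {m : ℤ} (hm : ¬ (N : ℤ) ∣ m) :
    ∑ j ∈ range N, (η ^ m) ^ j = 0 := by
  have hne : η ^ m - 1 ≠ 0 := sub_ne_zero.mpr fun h => hm ((hη.zpow_eq_one_iff_dvd m).mp h)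
  have hpow : (η ^ m) ^ N = 1 := by
    rw [← zpow_natCast, ← zpow_mul, mul_comm, zpow_mul, zpow_natCast, hη.pow_eq_one, one_zpow]
  exact (mul_eq_zero.mp (by rw [geom_sum_mul, hpow, sub_self])).resolve_right hne

theorem IsPrimitiveRoot.sum_add_inv_pow_eq_zero {K : Type*} [Field K] {η : K} {N : ℕ}
    (hη : IsPrimitiveRoot η N) {p : ℕ} (hp : Odd p) (hpN : p < N) :
    ∑ j ∈ range N, (η ^ j + (η ^ j)⁻¹) ^ p = 0 := by
  have hη0 : η ≠ 0 := hη.ne_zero (by omega)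
  have hterm : ∀ j i, i ≤ p →
      (η ^ j) ^ i * (η ^ j)⁻¹ ^ (p - i) = (η ^ (2 * i - p : ℤ)) ^ j := by
    intro j i hi
    simp only [← zpow_natCast]
    rw [inv_zpow', ← zpow_mul, ← zpow_mul, ← zpow_mul, ← zpow_add₀ hη0]
    congr 1
    push_cast [hi]
    ring
  calc ∑ j ∈ range N, (η ^ j + (η ^ j)⁻¹) ^ p
      = ∑ i ∈ range (p + 1), (∑ j ∈ range N, (η ^ (2 * i - p : ℤ)) ^ j) * p.choose i := by
        simp_rw [add_pow, sum_mul]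
        rw [sum_comm]
        refine sum_congr rfl fun i hi => sum_congr rfl fun j _ => ?_
        rw [hterm j i (Nat.lt_succ_iff.mp (mem_range.mp hi))]
    _ = 0 := by
        refine sum_eq_zero fun i hi => ?_
        have hi := mem_range.mp hi
        rw [hη.geom_sum_zpow_eq_zero, zero_mul]
        intro hdvd
        obtain ⟨k, hk⟩ := hp
        have := Int.eq_zero_of_dvd_of_natAbs_lt_natAbs hdvd (by omega)
        omega

theorem two_mul_neg_one_pow_mul_cos_eq (M j : ℕ) :
    2 * (((-1) ^ j * cos (j * π / (2 * M + 1)) : ℝ) : ℂ) =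
      Complex.exp (2 * π * Complex.I * ((M + 1 : ℕ) / (2 * M + 1 : ℕ))) ^ j +
      (Complex.exp (2 * π * Complex.I * ((M + 1 : ℕ) / (2 * M + 1 : ℕ))) ^ j)⁻¹ := by
  have hangle :
      (-1) ^ j * cos (j * π / (2 * M + 1)) = cos (2 * π * (M + 1) / (2 * M + 1) * j) := by
    rw [← cos_add_nat_mul_pi]
    congr 1
    field_simp
    ring
  rw [hangle, ← Complex.exp_nat_mul, ← Complex.exp_neg, Complex.ofReal_cos, Complex.cos]
  push_cast
  ring_nf

theorem psiPow_natCast_of_odd {p : ℕ} (hp : Odd p) (x : ℝ) : psiPow p x = x ^ p := by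
  rcases lt_trichotomy x 0 with hx | rfl | hx
  · rw [psiPow, Real.sign_of_neg hx, abs_of_neg hx, Real.rpow_natCast, hp.neg_pow]
    ring
  · rw [psiPow, Real.sign_zero, zero_mul, zero_pow hp.pos.ne']
  · rw [psiPow, Real.sign_of_pos hx, abs_of_pos hx, Real.rpow_natCast, one_mul]

theorem psiPow_neg (p x : ℝ) : psiPow p (-x) = -psiPow p x := by
  rw [psiPow, psiPow, Real.sign_neg, abs_neg, neg_mul]

theorem psiPow_of_pos (p : ℝ) {x : ℝ} (hx : 0 < x) : psiPow p x = exp (log x * p) := by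
  rw [psiPow, Real.sign_of_pos hx, abs_of_pos hx, one_mul, rpow_def_of_pos hx]

theorem sum_neg_one_pow_mul_psiPow_eq_zero (M : ℕ) {p : ℕ} (hp : Odd p)
    (hpM : p < 2 * M + 1) :
    ∑ j ∈ range (2 * M + 1), (-1) ^ j * psiPow p (cos (j * π / (2 * M + 1))) = 0 := by
  have hη : IsPrimitiveRoot
      (Complex.exp (2 * π * Complex.I * ((M + 1 : ℕ) / (2 * M + 1 : ℕ)))) (2 * M + 1) :=
    Complex.isPrimitiveRoot_exp_of_coprime _ _ (by omega) (by
      rw [show 2 * M + 1 = (M + 1) + M by ring, Nat.coprime_self_add_right]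
      simp)
  have hpow : ∀ j : ℕ, (-1) ^ j * psiPow p (cos (j * π / (2 * M + 1))) =
      ((-1) ^ j * cos (j * π / (2 * M + 1))) ^ p := by
    intro j
    rw [psiPow_natCast_of_odd hp, mul_pow, ← pow_mul, mul_comm j, pow_mul, hp.neg_one_pow]
  have hsum :
      ((2 ^ p * ∑ j ∈ range (2 * M + 1), ((-1) ^ j * cos (j * π / (2 * M + 1))) ^ p : ℝ) : ℂ) =
        0 := by
    rw [Complex.ofReal_mul, Complex.ofReal_sum, mul_sum]
    simp_rw [Complex.ofReal_pow, ← mul_pow, Complex.ofReal_ofNat, two_mul_neg_one_pow_mul_cos_eq]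
    exact hη.sum_add_inv_pow_eq_zero hp hpM
  simp_rw [hpow]
  exact (mul_eq_zero.mp (Complex.ofReal_eq_zero.mp hsum)).resolve_left (by positivity)

theorem sum_range_two_mul_add_one_of_symm {β : Type*} [AddCommMonoid β] (M : ℕ) (f : ℕ → β)
    (hf : ∀ j < M, f (2 * M - j) = f (j + 1)) :
    ∑ j ∈ range (2 * M + 1), f j = f 0 + 2 • ∑ j ∈ range M, f (j + 1) := by
  rw [sum_range_succ', two_mul, sum_range_add, ← sum_range_reflect (fun j => f (M + j + 1)),
    two_smul, add_comm (f 0)]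
  congr 2
  refine sum_congr rfl fun j hj => ?_
  rw [← hf j (mem_range.mp hj)]
  congr 1
  have := mem_range.mp hj
  omega

section cos

variable {M : ℕ}

theorem cos_mul_pi_div_pos {i : ℕ} (hi : i ≤ M) : 0 < cos (i * π / (2 * M + 1)) := by
  apply cos_pos_of_mem_Ioo
  constructor
  · have : 0 ≤ i * π / (2 * M + 1) := by positivity
    linarith [pi_pos]
  · rw [div_lt_iff₀ (by positivity)]
    have : (i : ℝ) ≤ M := by exact_mod_cast hi
    nlinarith [pi_pos]

theorem log_cos_mul_pi_div_lt {i j : ℕ} (hij : i < j) (hj : j ≤ M) :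
    log (cos (j * π / (2 * M + 1))) < log (cos (i * π / (2 * M + 1))) := by
  refine log_lt_log (cos_mul_pi_div_pos hj) (cos_lt_cos_of_nonneg_of_le_pi (by positivity) ?_ ?_)
  · rw [div_le_iff₀ (by positivity)]
    have : (j : ℝ) ≤ M := by exact_mod_cast hj
    nlinarith [pi_pos]
  · gcongr

end cos

noncomputable def foldedExponent (M i : ℕ) : ℝ := log (cos ((i + 1 : ℕ) * π / (2 * M + 1)))

theorem foldedExponent_lt_zero {M i : ℕ} (hi : i < M) : foldedExponent M i < 0 := by
  simpa [foldedExponent] using log_cos_mul_pi_div_lt (Nat.succ_pos i) hi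

theorem strictAntiOn_foldedExponent (M : ℕ) : StrictAntiOn (foldedExponent M) (range M) :=
  fun _ _ _ hj hij => log_cos_mul_pi_div_lt (Nat.succ_lt_succ hij) (mem_range.mp hj)

noncomputable def foldedSum (M : ℕ) (x : ℝ) : ℝ :=
  1 + expSum (range M) (fun i => 2 * (-1) ^ (i + 1)) (foldedExponent M) x

theorem sum_neg_one_pow_mul_psiPow_eq_foldedSum (M : ℕ) (x : ℝ) :
    ∑ j ∈ range (2 * M + 1), (-1) ^ j * psiPow x (cos (j * π / (2 * M + 1))) =
      foldedSum M x := by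
  rw [sum_range_two_mul_add_one_of_symm M]
  · simp only [foldedSum, expSum, foldedExponent, pow_zero, Nat.cast_zero, zero_mul, zero_div,
      cos_zero, one_mul, psiPow_of_pos x one_pos, log_one, exp_zero, nsmul_eq_mul, Nat.cast_ofNat,
      mul_sum]
    refine congrArg _ (sum_congr rfl fun i hi => ?_)
    rw [psiPow_of_pos x (cos_mul_pi_div_pos (mem_range.mp hi))]
    ring
  · intro j hj
    have hcos :
        cos ((2 * M - j : ℕ) * π / (2 * M + 1)) = -cos ((j + 1 : ℕ) * π / (2 * M + 1)) := by
      rw [← cos_pi_sub]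
      congr 1
      push_cast [hj.le.trans (Nat.le_mul_of_pos_left M two_pos)]
      field_simp
      ring
    have hsign : (-1 : ℝ) ^ (2 * M - j) = -(-1) ^ (j + 1) := by
      rw [show 2 * M - j = (j + 1) + 2 * (M - j - 1) + 1 by omega, pow_succ, pow_add, pow_mul]
      norm_num
    rw [hcos, hsign, psiPow_neg, neg_mul_neg]

theorem hasDerivAt_foldedSum (M : ℕ) (x : ℝ) :
    HasDerivAt (foldedSum M)
      (expSum (range M) (fun i => 2 * (-1) ^ (i + 1) * foldedExponent M i)
        (foldedExponent M) x) x :=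
  (hasDerivAt_expSum _ _ _ x).const_add 1

theorem card_deriv_foldedSum_zeros_lt {M : ℕ} (hM : 0 < M) {t : Finset ℝ}
    (ht : ∀ x ∈ t, deriv (foldedSum M) x = 0) : t.card < M := by
  simpa using card_zeros_expSum_lt (range M) _ _ (nonempty_range_iff.mpr hM.ne')
    (fun i hi => mul_ne_zero (by simp) (foldedExponent_lt_zero (mem_range.mp hi)).ne)
    (strictAntiOn_foldedExponent M).injOn
    fun x hx => (hasDerivAt_foldedSum M x).deriv ▸ ht x hx

theorem eventually_foldedSum_pos (M : ℕ) : ∀ᶠ x in atTop, 0 < foldedSum M x := by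
  have := (tendsto_expSum_atTop (range M) (fun i => 2 * (-1) ^ (i + 1)) (foldedExponent M)
    fun i hi => foldedExponent_lt_zero (mem_range.mp hi)).const_add 1
  rw [add_zero] at this
  exact this.eventually (eventually_gt_nhds one_pos)

/-- For a positive even integer `α`, `n = α+3`, and
`f(p) = ∑_{j=0}^{n-1} (-1)^j ψ_p(cos(jπ/n))`: `f(p) = 0` for every odd positive
integer `p < n`, and `f(p) < 0` for all `p ∈ (α-1, α+1)`. -/
theorem stmt7 (a : ℕ) (ha : Even a) (hpos : 0 < a) :
    (∀ p : ℕ, Odd p → p < a + 3 →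
      ∑ j ∈ Finset.range (a + 3),
        (-1 : ℝ) ^ j * psiPow (p : ℝ) (Real.cos ((j : ℝ) * Real.pi / ((a : ℝ) + 3))) = 0) ∧
    (∀ p : ℝ, (a : ℝ) - 1 < p → p < (a : ℝ) + 1 →
      ∑ j ∈ Finset.range (a + 3),
        (-1 : ℝ) ^ j * psiPow p (Real.cos ((j : ℝ) * Real.pi / ((a : ℝ) + 3))) < 0) := by
  obtain ⟨k, rfl⟩ := ha
  obtain ⟨n, rfl⟩ : ∃ n, k = n + 1 := ⟨k - 1, by omega⟩
  have hN : ((n + 1 + (n + 1) : ℕ) : ℝ) + 3 = 2 * ((n + 2 : ℕ) : ℝ) + 1 := by push_cast; ring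
  simp only [show n + 1 + (n + 1) + 3 = 2 * (n + 2) + 1 by ring, hN]
  refine ⟨fun p hp hpN => sum_neg_one_pow_mul_psiPow_eq_zero _ hp hpN, fun p hp₁ hp₂ => ?_⟩
  have hzero : ∀ i ≤ n + 1, foldedSum (n + 2) (2 * i + 1) = 0 := by
    intro i hi
    rw [← sum_neg_one_pow_mul_psiPow_eq_foldedSum]
    exact_mod_cast sum_neg_one_pow_mul_psiPow_eq_zero (n + 2) (p := 2 * i + 1)
      (odd_two_mul_add_one i) (by omega)
  rw [sum_neg_one_pow_mul_psiPow_eq_foldedSum]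
  refine lt_zero_of_mem_Ioo_of_card_deriv_zeros_le
    (fun x => (hasDerivAt_foldedSum _ x).differentiableAt) (eventually_foldedSum_pos _)
    (z := fun i => 2 * i + 1) (fun i j hij => by simpa using hij) hzero
    (fun t ht => Nat.lt_succ_iff.mp (card_deriv_foldedSum_zeros_lt (by omega) ht)) ⟨?_, ?_⟩
  · push_cast at hp₁ ⊢; linarith
  · push_cast at hp₂ ⊢; linarith
end

section
/- Suppose f : (−R,R) → ℝ is twice differentiable and Loewner convex on the set of n×n positive semidefinite matrices of rank at most k (2 ≤ k ≤ n) with entries in (−R,R). If A in this set is irreducible, then f''[A] is positive semidefinite. -/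
/-!
Pick `c` so that `u = A c` has no zero entry (possible because irreducibility makes every row of
`A` nonzero) and put `V = u uᵀ`. For small `t ≥ 0` the matrices `A + t V` are positive
semidefinite, have column space inside that of `A` (so rank at most `k`), have entries in
`(-R, R)`, and increase in the Loewner order. Loewner convexity therefore makes
`t ↦ xᵀ f[A + t V] x` convex on `[0, ε)`, so its second derivative at `0`,
`xᵀ (f''[A] ∘ V ∘ V) x`, is nonnegative. As `V ∘ V = w wᵀ` with `w = u ∘ u` nowhere zero, the
substitution `x = y / w` gives `yᵀ f''[A] y ≥ 0`.
-/

open Set Matrix Filter Topology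
open scoped ENNReal

theorem ConvexOn.nonneg_of_hasDerivAt_of_hasDerivAt {φ ψ : ℝ → ℝ} {a b C : ℝ} (hab : a < b)
    (hφ : ConvexOn ℝ (Ico a b) φ) (hφψ : ∀ t ∈ Ico a b, HasDerivAt φ (ψ t) t)
    (hψ : HasDerivAt ψ C a) : 0 ≤ C := by
  have hmono : MonotoneOn ψ (Ico a b) :=
    (hφ.monotoneOn_deriv fun t ht => (hφψ t ht).differentiableAt).congr
      fun t ht => (hφψ t ht).deriv
  have hacc : AccPt a (𝓟 (Ico a b)) := by
    rw [accPt_principal_iff_nhdsWithin, Ico_sdiff_left]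
    exact left_nhdsWithin_Ioo_neBot hab
  exact hψ.hasDerivWithinAt.nonneg_of_monotoneOn hacc hmono

namespace Matrix

theorem row_ne_zero_of_irreducible {ι R : Type*} [Nontrivial ι] [Zero R] {A : Matrix ι ι R}
    (hA : ∀ S : Set ι, S.Nonempty → S ≠ univ → ∃ i ∈ S, ∃ j ∈ Sᶜ, A i j ≠ 0) (i : ι) :
    A i ≠ 0 := by
  obtain ⟨j, hj⟩ := exists_ne i
  obtain ⟨_, rfl, l, -, hl⟩ := hA {i} (singleton_nonempty i) fun h => hj (h.symm ▸ mem_univ j :)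
  exact fun h => hl (by simp [h])

theorem exists_mulVec_forall_ne_zero {ι κ K : Type*} [Fintype ι] [Fintype κ] [Field K]
    [Infinite K] (A : Matrix ι κ K) (hA : ∀ i, A i ≠ 0) : ∃ c, ∀ i, (A *ᵥ c) i ≠ 0 := by
  classical
  let p : ι → Subspace K (κ → K) := fun i => LinearMap.ker ((LinearMap.proj i).comp A.mulVecLin)
  have hp : ∀ i, p i ≠ ⊤ := by
    intro i htop
    apply hA i
    ext j
    have : Pi.single j 1 ∈ p i := htop ▸ Submodule.mem_top
    simpa [p] using this
  have : ⋃ i, (p i : Set (κ → K)) ≠ univ := fun h =>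
    let ⟨i, hi⟩ := Subspace.exists_eq_top_of_iUnion_eq_univ h; hp i hi
  obtain ⟨c, hc⟩ := (ne_univ_iff_exists_notMem _).mp this
  refine ⟨c, fun i hi => hc (mem_iUnion.mpr ⟨i, ?_⟩)⟩
  simpa [p] using hi

theorem rank_add_vecMulVec_mulVec_le {m n K : Type*} [Fintype m] [Fintype n] [DecidableEq n]
    [Field K] (A : Matrix m n K) (c w : n → K) : (A + vecMulVec (A *ᵥ c) w).rank ≤ A.rank := by
  have : A + A * vecMulVec c w = A * (1 + vecMulVec c w) := by
    rw [Matrix.mul_add, Matrix.mul_one]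
  rw [← mul_vecMulVec, this]
  exact rank_mul_le_left _ _

theorem posSemidef_of_dotProduct_hadamard_vecMulVec_nonneg {ι : Type*} [Fintype ι]
    {M : Matrix ι ι ℝ} (hM : M.IsHermitian) {w : ι → ℝ} (hw : ∀ i, w i ≠ 0)
    (h : ∀ x, 0 ≤ x ⬝ᵥ (M ⊙ vecMulVec w w) *ᵥ x) : M.PosSemidef := by
  refine PosSemidef.of_dotProduct_mulVec_nonneg hM fun y => ?_
  have hquad : (y / w) ⬝ᵥ (M ⊙ vecMulVec w w) *ᵥ (y / w) = star y ⬝ᵥ M *ᵥ y := by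
    simp only [star_trivial, dotProduct, mulVec, hadamard_apply, vecMulVec_apply, Pi.div_apply,
      Finset.mul_sum]
    refine Finset.sum_congr rfl fun i _ => Finset.sum_congr rfl fun j _ => ?_
    field_simp [hw i, hw j]
  exact hquad ▸ h (y / w)

theorem eventually_add_smul_apply_mem {ι : Type*} [Finite ι] {U : Set ℝ} (hU : IsOpen U)
    (A V : Matrix ι ι ℝ) (hA : ∀ i j, A i j ∈ U) :
    ∀ᶠ t in 𝓝 (0 : ℝ), ∀ i j, (A + t • V) i j ∈ U :=
  eventually_all.2 fun i => eventually_all.2 fun j =>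
    (by fun_prop : Continuous fun t : ℝ => (A + t • V) i j).continuousAt.preimage_mem_nhds
      (by simpa using hU.mem_nhds (hA i j))

theorem hasDerivAt_dotProduct_map_hadamard_mulVec {ι : Type*} [Fintype ι] {g g' : ℝ → ℝ}
    (A V W : Matrix ι ι ℝ) (x : ι → ℝ) {t : ℝ}
    (hg : ∀ i j, HasDerivAt g (g' ((A + t • V) i j)) ((A + t • V) i j)) :
    HasDerivAt (fun s => x ⬝ᵥ ((A + s • V).map g ⊙ W) *ᵥ x)
      (x ⬝ᵥ ((A + t • V).map g' ⊙ V ⊙ W) *ᵥ x) t := by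
  have hentry : ∀ i j, HasDerivAt (fun s => g ((A + s • V) i j) * W i j)
      (g' ((A + t • V) i j) * V i j * W i j) t := fun i j => by
    have hpath : HasDerivAt (fun s => (A + s • V) i j) (V i j) t := by
      simpa using (hasDerivAt_mul_const (V i j)).const_add (A i j)
    exact ((hg i j).comp t hpath).mul_const _
  simp only [dotProduct, mulVec, hadamard_apply, map_apply]
  exact HasDerivAt.fun_sum fun i _ =>
    (HasDerivAt.fun_sum fun j _ => (hentry i j).mul_const (x j)).const_mul (x i)

end Matrix

def LoewnerConvexOn {ι : Type*} [Fintype ι] (S : Set (Matrix ι ι ℝ)) (f : ℝ → ℝ) : Prop :=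
  ∀ A ∈ S, ∀ B ∈ S, (A - B).PosSemidef → ∀ l : ℝ, 0 ≤ l → l ≤ 1 →
    (l • A.map f + (1 - l) • B.map f - (l • A + (1 - l) • B).map f).PosSemidef

namespace LoewnerConvexOn

variable {ι : Type*} [Fintype ι] {S : Set (Matrix ι ι ℝ)} {f : ℝ → ℝ} {A V : Matrix ι ι ℝ}

theorem convexOn_dotProduct_map_mulVec (hf : LoewnerConvexOn S f) (hV : V.PosSemidef)
    {I : Set ℝ} (hI : Convex ℝ I) (hAV : ∀ t ∈ I, A + t • V ∈ S) (x : ι → ℝ) :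
    ConvexOn ℝ I fun t => x ⬝ᵥ (A + t • V).map f *ᵥ x := by
  refine LinearOrder.convexOn_of_lt hI fun s hs t ht hst a b ha hb hab => ?_
  have hdiff : (A + t • V) - (A + s • V) = (t - s) • V := by module
  obtain rfl : a = 1 - b := by linarith
  have hmix : b • (A + t • V) + (1 - b) • (A + s • V) = A + ((1 - b) • s + b • t) • V := by
    module
  have h := (hf _ (hAV t ht) _ (hAV s hs) (hdiff ▸ hV.smul (sub_nonneg.mpr hst.le)) b hb.le
    (by linarith)).dotProduct_mulVec_nonneg x
  rw [hmix, star_trivial] at h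
  simp only [sub_mulVec, add_mulVec, smul_mulVec, dotProduct_sub, dotProduct_add,
    dotProduct_smul, smul_eq_mul] at h ⊢
  linarith

theorem dotProduct_map_hadamard_mulVec_nonneg {f' f'' : ℝ → ℝ} (hf : LoewnerConvexOn S f)
    (hV : V.PosSemidef) {ε : ℝ} (hε : 0 < ε) (hAV : ∀ t ∈ Ico 0 ε, A + t • V ∈ S)
    (hf' : ∀ t ∈ Ico 0 ε, ∀ i j, HasDerivAt f (f' ((A + t • V) i j)) ((A + t • V) i j))
    (hf'' : ∀ i j, HasDerivAt f' (f'' (A i j)) (A i j)) (x : ι → ℝ) :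
    0 ≤ x ⬝ᵥ (A.map f'' ⊙ V ⊙ V) *ᵥ x := by
  have hφ := hf.convexOn_dotProduct_map_mulVec hV (convex_Ico 0 ε) hAV x
  refine hφ.nonneg_of_hasDerivAt_of_hasDerivAt hε
    (ψ := fun t => x ⬝ᵥ ((A + t • V).map f' ⊙ V) *ᵥ x) (fun t ht => ?_) ?_
  · simpa using hasDerivAt_dotProduct_map_hadamard_mulVec A V (of 1) x (hf' t ht)
  · simpa using hasDerivAt_dotProduct_map_hadamard_mulVec A V V x (t := 0) (by simpa using hf'')

end LoewnerConvexOn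

theorem stmt10_general (R : ℝ≥0∞) (n k : ℕ) (hk : 2 ≤ k) (hkn : k ≤ n)
    (f f' f'' : ℝ → ℝ)
    (hderiv1 : ∀ x : ℝ, (Real.nnabs x : ℝ≥0∞) < R → HasDerivAt f (f' x) x)
    (hderiv2 : ∀ x : ℝ, (Real.nnabs x : ℝ≥0∞) < R → HasDerivAt f' (f'' x) x)
    (hconv : ∀ A B : Matrix (Fin n) (Fin n) ℝ,
      (∀ i j, (Real.nnabs (A i j) : ℝ≥0∞) < R) →
      (∀ i j, (Real.nnabs (B i j) : ℝ≥0∞) < R) →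
      A.rank ≤ k → B.rank ≤ k →
      B.PosSemidef → (A - B).PosSemidef →
      ∀ l : ℝ, 0 ≤ l → l ≤ 1 →
        (l • A.map f + (1 - l) • B.map f - (l • A + (1 - l) • B).map f).PosSemidef)
    (A : Matrix (Fin n) (Fin n) ℝ) (hA : A.PosSemidef) (hrk : A.rank ≤ k)
    (hent : ∀ i j, (Real.nnabs (A i j) : ℝ≥0∞) < R)
    (hirr : ∀ S : Set (Fin n), S.Nonempty → S ≠ Set.univ →
      ∃ i ∈ S, ∃ j ∈ Sᶜ, A i j ≠ 0) :
    (A.map f'').PosSemidef := by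
  set U := {x : ℝ | (Real.nnabs x : ℝ≥0∞) < R}
  have hU : IsOpen U := isOpen_lt (ENNReal.continuous_coe.comp continuous_nnnorm) continuous_const
  set S := {M : Matrix (Fin n) (Fin n) ℝ | (∀ i j, M i j ∈ U) ∧ M.rank ≤ k ∧ M.PosSemidef}
  have hf : LoewnerConvexOn S f := fun M ⟨hMU, hMk, _⟩ N ⟨hNU, hNk, hN⟩ =>
    hconv M N hMU hNU hMk hNk hN
  have : Nontrivial (Fin n) := Fin.nontrivial_iff_two_le.mpr (hk.trans hkn)
  obtain ⟨c, hc⟩ := exists_mulVec_forall_ne_zero A (row_ne_zero_of_irreducible hirr)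
  set u := A *ᵥ c
  have hV : (vecMulVec u u).PosSemidef := by simpa using posSemidef_vecMulVec_self_star u
  obtain ⟨ε, hε, hεU⟩ :=
    Metric.eventually_nhds_iff.mp (eventually_add_smul_apply_mem hU A (vecMulVec u u) hent)
  have hpath : ∀ t ∈ Ico 0 ε, A + t • vecMulVec u u ∈ S := fun t ht =>
    ⟨hεU (by simpa [abs_of_nonneg ht.1] using ht.2),
      by rw [← vecMulVec_smul]; exact (rank_add_vecMulVec_mulVec_le A c _).trans hrk,
      hA.add (hV.smul ht.1)⟩
  refine posSemidef_of_dotProduct_hadamard_vecMulVec_nonneg (hA.isHermitian.map f'' fun _ => rfl)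
    (w := u * u) (fun i => mul_ne_zero (hc i) (hc i)) fun x => ?_
  rw [show vecMulVec (u * u) (u * u) = vecMulVec u u ⊙ vecMulVec u u by
    ext i j; simp only [vecMulVec_apply, hadamard_apply, Pi.mul_apply]; ring, ← hadamard_assoc]
  exact hf.dotProduct_map_hadamard_mulVec_nonneg hV hε hpath
    (fun t ht i j => hderiv1 _ ((hpath t ht).1 i j)) (fun i j => hderiv2 _ (hent i j)) x

/-- If `f : (-R,R) → ℝ` is twice differentiable and Loewner convex on `n×n` PSD matrices
of rank at most `k` (`2 ≤ k ≤ n`) with entries in `(-R,R)`, and `A` in this set is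
irreducible, then `f''[A]` is positive semidefinite. -/
theorem stmt10 (R : ℝ≥0∞) (hR : 0 < R) (n k : ℕ) (hk : 2 ≤ k) (hkn : k ≤ n)
    (f f' f'' : ℝ → ℝ)
    (hderiv1 : ∀ x : ℝ, (Real.nnabs x : ℝ≥0∞) < R → HasDerivAt f (f' x) x)
    (hderiv2 : ∀ x : ℝ, (Real.nnabs x : ℝ≥0∞) < R → HasDerivAt f' (f'' x) x)
    (hconv : ∀ A B : Matrix (Fin n) (Fin n) ℝ,
      (∀ i j, (Real.nnabs (A i j) : ℝ≥0∞) < R) →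
      (∀ i j, (Real.nnabs (B i j) : ℝ≥0∞) < R) →
      A.rank ≤ k → B.rank ≤ k →
      B.PosSemidef → (A - B).PosSemidef →
      ∀ l : ℝ, 0 ≤ l → l ≤ 1 →
        (l • A.map f + (1 - l) • B.map f - (l • A + (1 - l) • B).map f).PosSemidef)
    (A : Matrix (Fin n) (Fin n) ℝ) (hA : A.PosSemidef) (hrk : A.rank ≤ k)
    (hent : ∀ i j, (Real.nnabs (A i j) : ℝ≥0∞) < R)
    (hirr : ∀ S : Set (Fin n), S.Nonempty → S ≠ Set.univ →
      ∃ i ∈ S, ∃ j ∈ Sᶜ, A i j ≠ 0) :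
    (A.map f'').PosSemidef :=
  stmt10_general R n k hk hkn f f' f'' hderiv1 hderiv2 hconv A hA hrk hent hirr
end
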